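/- arXiv:1708.03591 — 2 statements merged into one kernel-verified Lean document; each statement's English description precedes it below -/
import Mathlib

section
/- Let G be a weighted directed graph on vertex set {1,…,N} with Laplacian L, suppose G has a rooted-out branch, and let k_u > 0. Let w : [0,∞) → ℝ^{3N} be a continuous perturbation satisfying ‖w(t)‖ ≤ k_w e^{−λ_w t} ‖w(0)‖ for all t ≥ 0, for some constants k_w, λ_w > 0. If e : [0,∞) → ℝ^{3N} is differentiable and satisfies ė(t) = −k_u (L ⊗ I_3) e(t) + w(t), then there exist a point e* in the consensus set E = {x ∈ ℝ^{3N} : x_1 = ⋯ = x_N, x_i ∈ ℝ³} and constants c > 0 and λ > 0 such that ‖e(t) − e*‖ ≤ c e^{−λ t} for all t ≥ 0. -/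
open scoped Kronecker

/-- The Laplacian of the weighted directed graph on `Fin N` with weights `a`. -/
def graphLaplacian {N : ℕ} (a : Fin N → Fin N → ℝ) : Matrix (Fin N) (Fin N) ℝ :=
  Matrix.of fun i j => if i = j then ∑ k ∈ Finset.univ.erase i, a i k else -(a i j)

/-- `G` has a rooted-out branch: some vertex has a directed path to every other vertex
(information flows from `j` to `i` along an edge when `a i j > 0`). -/
def hasRootedOutBranch {N : ℕ} (a : Fin N → Fin N → ℝ) : Prop :=
  ∃ r : Fin N, ∀ v : Fin N, Relation.ReflTransGen (fun u v => 0 < a v u) r v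

/-- The Euclidean norm on `ℝ^m`. -/
noncomputable def enorm {m : Type*} [Fintype m] (v : m → ℝ) : ℝ :=
  Real.sqrt (∑ i, v i ^ 2)

/-!
Write `A = k_u L`. Its off-diagonal entries are nonpositive and its rows sum to zero, so
`P t = exp (-t A)` is row stochastic for `t ≥ 0`, and since the root reaches every vertex, the
column of `P 1` at the root is bounded below by some `δ > 0`. A stochastic matrix with such a
column shrinks the oscillation `max x - min x` by the factor `1 - δ`, hence
`osc (P t x) ≤ e^δ e^{-δ t} osc x`. Variation of constants,
`e t = P (t - t₀) (e t₀) + ∫_{t₀}^t P (t - s) (w s) ds`, gives two estimates: from `t₀ = 0`,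
`osc (e t)` decays exponentially; from `t₀ = t`, `‖e t' - e t‖ ≤ osc (e t) + ∫_t^∞ ‖w‖`, because a
stochastic matrix moves no coordinate by more than the oscillation. Hence `e` converges
exponentially fast, and its limit has zero oscillation. The factor `⊗ I₃` decouples the three
spatial coordinates.
-/

open Finset Matrix NormedSpace Filter Topology intervalIntegral
open scoped Interval

attribute [local instance] Matrix.linftyOpNormedAddCommGroup Matrix.linftyOpNormedRing
  Matrix.linftyOpNormedAlgebra

section Oscillation

variable {n : Type*} [Fintype n]

lemma abs_apply_le_norm (x : n → ℝ) (i : n) : |x i| ≤ ‖x‖ :=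
  Real.norm_eq_abs (x i) ▸ norm_le_pi_norm x i

variable [Nonempty n]

noncomputable def osc (x : n → ℝ) : ℝ :=
  univ.sup' univ_nonempty x - univ.inf' univ_nonempty x

lemma apply_le_univ_sup' (x : n → ℝ) (i : n) : x i ≤ univ.sup' univ_nonempty x :=
  le_sup' x (mem_univ i)

lemma univ_inf'_le_apply (x : n → ℝ) (i : n) : univ.inf' univ_nonempty x ≤ x i :=
  inf'_le x (mem_univ i)

lemma osc_le_iff {x : n → ℝ} {c : ℝ} : osc x ≤ c ↔ ∀ i j, x i - x j ≤ c := by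
  simp only [osc, sub_le_iff_le_add, Finset.sup'_le_iff, mem_univ, true_implies]
  refine forall_congr' fun i => ?_
  rw [← sub_le_iff_le_add', Finset.le_inf'_iff]
  simp only [mem_univ, true_implies, sub_le_iff_le_add']

lemma sub_le_osc (x : n → ℝ) (i j : n) : x i - x j ≤ osc x :=
  osc_le_iff.1 le_rfl i j

lemma osc_nonneg (x : n → ℝ) : 0 ≤ osc x := by
  simpa using sub_le_osc x (Classical.arbitrary n) (Classical.arbitrary n)

lemma abs_sub_le_osc (x : n → ℝ) (i j : n) : |x i - x j| ≤ osc x :=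
  abs_sub_le_iff.2 ⟨sub_le_osc x i j, sub_le_osc x j i⟩

lemma osc_le_osc_add_two_mul_norm_sub (x y : n → ℝ) : osc x ≤ osc y + 2 * ‖x - y‖ :=
  osc_le_iff.2 fun i j => by
    have hi := abs_apply_le_norm (x - y) i
    have hj := abs_apply_le_norm (x - y) j
    simp only [Pi.sub_apply] at hi hj
    linarith [sub_le_osc y i j, le_abs_self (x i - y i), neg_abs_le (x j - y j)]

lemma osc_add_le (x y : n → ℝ) : osc (x + y) ≤ osc x + osc y :=
  osc_le_iff.2 fun i j => by
    simp only [Pi.add_apply]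
    linarith [sub_le_osc x i j, sub_le_osc y i j]

lemma osc_le_two_mul_norm (x : n → ℝ) : osc x ≤ 2 * ‖x‖ :=
  osc_le_iff.2 fun i j => by
    linarith [abs_apply_le_norm x i, abs_apply_le_norm x j, le_abs_self (x i), neg_abs_le (x j)]

end Oscillation

section RowStochastic

variable {n : Type*} [Fintype n] [DecidableEq n] {S : Matrix n n ℝ}

lemma mulVec_apply_le (hS : S ∈ rowStochastic ℝ n) {r : n} {δ b : ℝ} (hδ : ∀ i, δ ≤ S i r)
    {x : n → ℝ} (hx : ∀ j, x j ≤ b) (i : n) : (S *ᵥ x) i ≤ δ * x r + (1 - δ) * b := by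
  have hrow := (mem_rowStochastic_iff_sum.1 hS).2 i
  have hrest : ∑ j ∈ univ.erase r, S i j * (x j - b) ≤ 0 :=
    sum_nonpos fun j _ => mul_nonpos_of_nonneg_of_nonpos
      (nonneg_of_mem_rowStochastic hS) (sub_nonpos.2 (hx j))
  have hsplit : (S *ᵥ x) i - b = S i r * (x r - b) + ∑ j ∈ univ.erase r, S i j * (x j - b) := by
    rw [add_sum_erase univ (fun j => S i j * (x j - b)) (mem_univ r)]
    simp only [mulVec, dotProduct, mul_sub, sum_sub_distrib, ← sum_mul, hrow, one_mul]
  nlinarith [hδ i, hx r]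

lemma le_mulVec_apply (hS : S ∈ rowStochastic ℝ n) {r : n} {δ b : ℝ} (hδ : ∀ i, δ ≤ S i r)
    {x : n → ℝ} (hx : ∀ j, b ≤ x j) (i : n) : δ * x r + (1 - δ) * b ≤ (S *ᵥ x) i := by
  have := mulVec_apply_le hS hδ (x := -x) (b := -b) (fun j => neg_le_neg (hx j)) i
  simp only [mulVec_neg, Pi.neg_apply] at this
  linarith

lemma norm_mulVec_le (hS : S ∈ rowStochastic ℝ n) (x : n → ℝ) : ‖S *ᵥ x‖ ≤ ‖x‖ := by
  refine (pi_norm_le_iff_of_nonneg (norm_nonneg x)).2 fun i => Real.norm_eq_abs _ ▸ abs_le.2 ?_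
  have hnn : ∀ k, (0 : ℝ) ≤ S k i := fun k => nonneg_of_mem_rowStochastic hS
  constructor
  · simpa using le_mulVec_apply hS hnn (b := -‖x‖)
      (fun j => neg_le_of_abs_le (abs_apply_le_norm x j)) i
  · simpa using mulVec_apply_le hS hnn (b := ‖x‖)
      (fun j => le_of_abs_le (abs_apply_le_norm x j)) i

variable [Nonempty n]

lemma osc_mulVec_le (hS : S ∈ rowStochastic ℝ n) {r : n} {δ : ℝ} (hδ : ∀ i, δ ≤ S i r)
    (x : n → ℝ) : osc (S *ᵥ x) ≤ (1 - δ) * osc x :=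
  osc_le_iff.2 fun i j => by
    have hi := mulVec_apply_le hS hδ (apply_le_univ_sup' x) i
    have hj := le_mulVec_apply hS hδ (univ_inf'_le_apply x) j
    rw [osc]
    linarith

lemma abs_mulVec_apply_sub_le_osc (hS : S ∈ rowStochastic ℝ n) (x : n → ℝ) (i : n) :
    |(S *ᵥ x) i - x i| ≤ osc x := by
  have hnn : ∀ k, (0 : ℝ) ≤ S k i := fun k => nonneg_of_mem_rowStochastic hS
  have hup := mulVec_apply_le hS hnn (apply_le_univ_sup' x) i
  have hlo := le_mulVec_apply hS hnn (univ_inf'_le_apply x) i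
  rw [osc, abs_sub_le_iff]
  constructor <;> linarith [apply_le_univ_sup' x i, univ_inf'_le_apply x i]

lemma norm_mulVec_sub_le_osc (hS : S ∈ rowStochastic ℝ n) (x : n → ℝ) : ‖S *ᵥ x - x‖ ≤ osc x :=
  (pi_norm_le_iff_of_nonneg (osc_nonneg x)).2 fun i =>
    (Real.norm_eq_abs _).trans_le (abs_mulVec_apply_sub_le_osc hS x i)

end RowStochastic

section MatrixExp

variable {n : Type*} [Fintype n]

noncomputable def mulVecCLM : Matrix n n ℝ →L[ℝ] (n → ℝ) →L[ℝ] n → ℝ :=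
  LinearMap.toContinuousLinearMap
    { toFun := fun M => LinearMap.toContinuousLinearMap M.mulVecLin
      map_add' := fun M N => by ext v i; simp
      map_smul' := fun c M => by ext v i; simp }

@[simp] lemma mulVecCLM_apply (M : Matrix n n ℝ) (v : n → ℝ) : mulVecCLM M v = M *ᵥ v := rfl

variable [DecidableEq n]

lemma HasDerivAt.mulVec {M : ℝ → Matrix n n ℝ} {v : ℝ → n → ℝ} {M' : Matrix n n ℝ}
    {v' : n → ℝ} {t : ℝ} (hM : HasDerivAt M M' t) (hv : HasDerivAt v v' t) :
    HasDerivAt (fun s => M s *ᵥ v s) (M' *ᵥ v t + M t *ᵥ v') t := by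
  have hF : HasDerivAt (fun s => mulVecCLM (M s)) (mulVecCLM M') t :=
    mulVecCLM.hasFDerivAt.comp_hasDerivAt t hM
  have := hF.clm_apply hv
  simp only [mulVecCLM_apply] at this
  convert this using 1

lemma continuous_exp_smul (A : Matrix n n ℝ) : Continuous fun s : ℝ => exp (s • A) :=
  continuous_iff_continuousAt.2 fun s => (hasDerivAt_exp_smul_const A s).continuousAt

lemma exp_smul_mul_exp_smul (A : Matrix n n ℝ) (s t : ℝ) :
    exp (s • A) * exp (t • A) = exp ((s + t) • A) := by
  rw [add_smul, Matrix.exp_add_of_commute _ _ ((Commute.refl A).smul_left s |>.smul_right t)]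

lemma exp_mulVec_of_mulVec_eq_zero {X : Matrix n n ℝ} {v : n → ℝ} (h : X *ᵥ v = 0) :
    exp X *ᵥ v = v := by
  have hderiv : ∀ s : ℝ, HasDerivAt (fun s : ℝ => exp (s • X) *ᵥ v) 0 s := fun s => by
    have := (hasDerivAt_exp_smul_const X s).mulVec (hasDerivAt_const s v)
    rwa [← mulVec_mulVec, h, mulVec_zero, add_zero] at this
  simpa using is_const_of_deriv_eq_zero (fun s => (hderiv s).differentiableAt)
    (fun s => (hderiv s).deriv) 1 0

lemma hasSum_exp_apply (B : Matrix n n ℝ) (i j : n) :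
    HasSum (fun m : ℕ => (m.factorial : ℝ)⁻¹ * (B ^ m) i j) (exp B i j) := by
  have hsum : HasSum (fun m : ℕ => ((m.factorial : ℝ)⁻¹ • B ^ m : n → n → ℝ)) (exp B) := by
    rw [exp_eq_tsum ℝ]
    exact (expSeries_summable' (𝕂 := ℝ) B).hasSum
  exact Pi.hasSum.1 (Pi.hasSum.1 hsum i) j

lemma exp_apply_nonneg {B : Matrix n n ℝ} (hB : ∀ i j, 0 ≤ B i j) (i j : n) : 0 ≤ exp B i j :=
  (hasSum_exp_apply B i j).nonneg fun m => mul_nonneg (by positivity) (pow_apply_nonneg hB m i j)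

lemma exp_apply_pos_of_pow_apply_pos {B : Matrix n n ℝ} (hB : ∀ i j, 0 ≤ B i j) {i j : n}
    {m : ℕ} (hm : 0 < (B ^ m) i j) : 0 < exp B i j := by
  rw [← (hasSum_exp_apply B i j).tsum_eq]
  exact (hasSum_exp_apply B i j).summable.tsum_pos
    (fun k => mul_nonneg (by positivity) (pow_apply_nonneg hB k i j)) m (by positivity)

lemma exists_pow_apply_pos {B : Matrix n n ℝ} (hB : ∀ i j, 0 ≤ B i j) {rel : n → n → Prop}
    (hrel : ∀ u v, rel u v → 0 < B v u) {r v : n} (h : Relation.ReflTransGen rel r v) :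
    ∃ m : ℕ, 0 < (B ^ m) v r := by
  induction h with
  | refl => exact ⟨0, by simp⟩
  | tail _ huv ih =>
    obtain ⟨m, hm⟩ := ih
    refine ⟨m + 1, ?_⟩
    rw [pow_succ', mul_apply]
    exact lt_of_lt_of_le (mul_pos (hrel _ _ huv) hm) (single_le_sum
      (fun k _ => mul_nonneg (hB _ k) (pow_apply_nonneg hB m k r)) (mem_univ _))

-- For `d` above the diagonal of `A`, `d • 1 - A` is entrywise nonnegative when the off-diagonal
-- entries of `A` are nonpositive; this is how signs of `exp (-t A)` are read off the series.
lemma exp_neg_smul_eq (A : Matrix n n ℝ) (d t : ℝ) :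
    exp ((-t) • A) = Real.exp (-(t * d)) • exp (t • (d • 1 - A)) := by
  have hsplit : (-t) • A = t • (d • 1 - A) + algebraMap ℝ (Matrix n n ℝ) (-(t * d)) := by
    rw [algebraMap_eq_diagonal]
    ext i j
    by_cases h : i = j
    · subst h
      simp
      ring
    · simp [h]
  have hscalar : exp (algebraMap ℝ (Matrix n n ℝ) (-(t * d))) = Real.exp (-(t * d)) • 1 := by
    refine (algebraMap_exp_comm (𝔸 := Matrix n n ℝ) _).symm.trans ?_
    rw [Algebra.algebraMap_eq_smul_one, Real.exp_eq_exp_ℝ]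
  rw [hsplit, Matrix.exp_add_of_commute _ _ (Algebra.commute_algebraMap_right _ _), hscalar,
    mul_smul_comm, mul_one]

end MatrixExp

section HeatSemigroup

variable {n : Type*} {A : Matrix n n ℝ}

lemma exists_diag_lt [Fintype n] (A : Matrix n n ℝ) : ∃ d, ∀ i, A i i < d :=
  ⟨∑ i, |A i i| + 1, fun i => by
    linarith [le_abs_self (A i i), single_le_sum (fun j _ => abs_nonneg (A j j)) (mem_univ i)]⟩

lemma smul_sub_apply_nonneg [DecidableEq n] (hoff : ∀ i j, i ≠ j → A i j ≤ 0) {d t : ℝ}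
    (hd : ∀ i, A i i ≤ d) (ht : 0 ≤ t) (i j : n) :
    0 ≤ (t • (d • 1 - A)) i j := by
  by_cases h : i = j
  · subst h
    simpa using mul_nonneg ht (sub_nonneg.2 (hd i))
  · simpa [h] using mul_nonneg ht (neg_nonneg.2 (hoff i j h))

variable [Fintype n] [DecidableEq n]

lemma exp_neg_smul_apply_nonneg (hoff : ∀ i j, i ≠ j → A i j ≤ 0) {t : ℝ} (ht : 0 ≤ t) (i j : n) :
    0 ≤ exp ((-t) • A) i j := by
  obtain ⟨d, hd⟩ := exists_diag_lt A
  rw [exp_neg_smul_eq A d t, Matrix.smul_apply, smul_eq_mul]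
  exact mul_nonneg (Real.exp_pos _).le
    (exp_apply_nonneg (smul_sub_apply_nonneg hoff (fun i => (hd i).le) ht) i j)

lemma exp_neg_smul_mem_rowStochastic (hoff : ∀ i j, i ≠ j → A i j ≤ 0) (hrow : A *ᵥ 1 = 0)
    {t : ℝ} (ht : 0 ≤ t) :
    exp ((-t) • A) ∈ rowStochastic ℝ n :=
  ⟨exp_neg_smul_apply_nonneg hoff ht,
    exp_mulVec_of_mulVec_eq_zero (by rw [smul_mulVec, hrow, smul_zero])⟩

lemma exp_neg_smul_apply_pos (hoff : ∀ i j, i ≠ j → A i j ≤ 0) {t : ℝ} (ht : 0 < t) {r v : n}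
    (hpath : Relation.ReflTransGen (fun u v => A v u < 0) r v) : 0 < exp ((-t) • A) v r := by
  obtain ⟨d, hd⟩ := exists_diag_lt A
  have hB := smul_sub_apply_nonneg hoff (fun i => (hd i).le) ht.le
  have hedge : ∀ u w, A w u < 0 → 0 < (t • (d • 1 - A)) w u := fun u w huw => by
    by_cases h : w = u
    · subst h
      simpa using mul_pos ht (sub_pos.2 (hd w))
    · simpa [h] using mul_pos ht (neg_pos.2 huw)
  obtain ⟨m, hm⟩ := exists_pow_apply_pos hB hedge hpath
  rw [exp_neg_smul_eq A d t, Matrix.smul_apply, smul_eq_mul]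
  exact mul_pos (Real.exp_pos _) (exp_apply_pos_of_pow_apply_pos hB hm)

end HeatSemigroup

section OscillationDecay

lemma le_pow_mul_of_step {g : ℝ → ℝ} {q : ℝ} (hq : 0 ≤ q) (hmono : ∀ t, 0 ≤ t → g t ≤ g 0)
    (hstep : ∀ t, 0 ≤ t → g (t + 1) ≤ q * g t) (m : ℕ) {t : ℝ} (ht : m ≤ t) :
    g t ≤ q ^ m * g 0 := by
  induction m generalizing t with
  | zero => simpa using hmono t (by simpa using ht)
  | succ m ih =>
    have ht' : (m : ℝ) ≤ t - 1 := by push_cast at ht; linarith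
    calc g t = g (t - 1 + 1) := by rw [sub_add_cancel]
      _ ≤ q * g (t - 1) := hstep _ ((Nat.cast_nonneg m).trans ht')
      _ ≤ q * (q ^ m * g 0) := mul_le_mul_of_nonneg_left (ih ht') hq
      _ = q ^ (m + 1) * g 0 := by ring

lemma one_sub_pow_floor_le {δ : ℝ} (hδ0 : 0 ≤ δ) (hδ1 : δ ≤ 1) (t : ℝ) :
    (1 - δ) ^ ⌊t⌋₊ ≤ Real.exp δ * Real.exp (-δ * t) := by
  have hfloor : t - 1 ≤ ⌊t⌋₊ := by linarith [Nat.lt_floor_add_one t]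
  calc (1 - δ) ^ ⌊t⌋₊ ≤ Real.exp (-δ) ^ ⌊t⌋₊ :=
        pow_le_pow_left₀ (by linarith) (Real.one_sub_le_exp_neg δ) _
    _ = Real.exp (-δ * ⌊t⌋₊) := by rw [← Real.exp_nat_mul]; ring_nf
    _ ≤ Real.exp (δ + -δ * t) := Real.exp_le_exp.2 (by nlinarith)
    _ = Real.exp δ * Real.exp (-δ * t) := Real.exp_add _ _

variable {n : Type*} [Fintype n] [DecidableEq n] [Nonempty n] {A : Matrix n n ℝ}

theorem exists_osc_exp_neg_smul_mulVec_le (hoff : ∀ i j, i ≠ j → A i j ≤ 0) (hrow : A *ᵥ 1 = 0)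
    {r : n} (hpath : ∀ v, Relation.ReflTransGen (fun u v => A v u < 0) r v) :
    ∃ δ > 0, ∀ t, 0 ≤ t → ∀ x : n → ℝ,
      osc (exp ((-t) • A) *ᵥ x) ≤ Real.exp δ * Real.exp (-δ * t) * osc x := by
  set P₁ := exp ((-1 : ℝ) • A)
  have hP₁ := exp_neg_smul_mem_rowStochastic hoff hrow zero_le_one
  obtain ⟨δ, hδpos, hδle⟩ : ∃ δ > 0, ∀ v, δ ≤ P₁ v r :=
    ⟨univ.inf' univ_nonempty (fun v => P₁ v r),
      (lt_inf'_iff _).2 fun v _ => exp_neg_smul_apply_pos hoff one_pos (hpath v),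
      fun v => inf'_le _ (mem_univ v)⟩
  have hδ1 : δ ≤ 1 := (hδle r).trans (le_one_of_mem_rowStochastic hP₁)
  refine ⟨δ, hδpos, fun t ht x => ?_⟩
  set g := fun s : ℝ => osc (exp ((-s) • A) *ᵥ x)
  have hmono : ∀ s, 0 ≤ s → g s ≤ g 0 := fun s hs => by
    have hS := exp_neg_smul_mem_rowStochastic hoff hrow hs
    simpa [g] using osc_mulVec_le hS (r := r) (δ := 0) (fun i => nonneg_of_mem_rowStochastic hS) x
  have hstep : ∀ s, 0 ≤ s → g (s + 1) ≤ (1 - δ) * g s := fun s _ => by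
    have hsplit : exp ((-(s + 1)) • A) = P₁ * exp ((-s) • A) := by
      rw [exp_smul_mul_exp_smul]; congr 2; ring
    simp only [g, hsplit, ← mulVec_mulVec]
    exact osc_mulVec_le hP₁ hδle _
  calc g t ≤ (1 - δ) ^ ⌊t⌋₊ * g 0 :=
        le_pow_mul_of_step (by linarith) hmono hstep _ (Nat.floor_le ht)
    _ ≤ Real.exp δ * Real.exp (-δ * t) * g 0 :=
      mul_le_mul_of_nonneg_right (one_sub_pow_floor_le hδpos.le hδ1 t) (osc_nonneg _)
    _ = Real.exp δ * Real.exp (-δ * t) * osc x := by simp [g]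

end OscillationDecay

section Analysis

lemma tendsto_mul_exp_neg_mul_atTop (C : ℝ) {μ : ℝ} (hμ : 0 < μ) :
    Tendsto (fun t => C * Real.exp (-μ * t)) atTop (𝓝 0) := by
  have := (Real.tendsto_exp_neg_atTop_nhds_zero.comp (tendsto_id.const_mul_atTop hμ)).const_mul C
  simpa [Function.comp_def, neg_mul] using this

lemma nonpos_of_forall_le_mul_exp_neg {a C μ : ℝ} (hμ : 0 < μ)
    (h : ∀ t, 0 ≤ t → a ≤ C * Real.exp (-μ * t)) : a ≤ 0 :=
  ge_of_tendsto (tendsto_mul_exp_neg_mul_atTop C hμ) (eventually_atTop.2 ⟨0, h⟩)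

theorem exists_norm_sub_le_of_norm_sub_le_mul_exp {E : Type*} [NormedAddCommGroup E]
    [CompleteSpace E] {f : ℝ → E} {C μ : ℝ} (hμ : 0 < μ)
    (h : ∀ t t', 0 ≤ t → t ≤ t' → ‖f t' - f t‖ ≤ C * Real.exp (-μ * t)) :
    ∃ x, ∀ t, 0 ≤ t → ‖f t - x‖ ≤ C * Real.exp (-μ * t) := by
  have hcauchy : CauchySeq f := Metric.cauchySeq_iff'.2 fun ε hε => by
    obtain ⟨N, hN, hN0⟩ := (((tendsto_mul_exp_neg_mul_atTop C hμ).eventually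
      (gt_mem_nhds hε)).and (eventually_ge_atTop 0)).exists
    exact ⟨N, fun t ht => by rw [dist_eq_norm]; exact (h N t hN0 ht).trans_lt hN⟩
  obtain ⟨x, hx⟩ := cauchySeq_tendsto_of_complete hcauchy
  refine ⟨x, fun t ht => ?_⟩
  rw [norm_sub_rev]
  exact le_of_tendsto (hx.sub_const (f t)).norm (eventually_atTop.2 ⟨t, fun t' => h t t' ht⟩)

lemma mul_exp_neg_two_mul_le {μ : ℝ} (hμ : 0 < μ) (t : ℝ) :
    t * Real.exp (-(2 * μ) * t) ≤ Real.exp (-μ * t) / μ := by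
  rw [le_div_iff₀ hμ]
  calc t * Real.exp (-(2 * μ) * t) * μ = μ * t * Real.exp (-(2 * μ) * t) := by ring
    _ ≤ Real.exp (μ * t) * Real.exp (-(2 * μ) * t) := by
      gcongr
      linarith [Real.add_one_le_exp (μ * t)]
    _ = Real.exp (-μ * t) := by rw [← Real.exp_add]; ring_nf

lemma integral_exp_neg_mul_le {l a b : ℝ} (hl : 0 < l) :
    ∫ s in a..b, Real.exp (-l * s) ≤ Real.exp (-l * a) / l := by
  rw [integral_comp_mul_left (fun s => Real.exp s) (neg_ne_zero.2 hl.ne'), integral_exp,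
    smul_eq_mul, inv_neg, neg_mul, ← mul_neg, neg_sub, mul_comm, ← div_eq_mul_inv]
  exact div_le_div_of_nonneg_right (by linarith [Real.exp_pos (-l * b)]) hl.le

lemma osc_intervalIntegral_le {n : Type*} [Fintype n] [Nonempty n] {f : ℝ → n → ℝ} {a b c : ℝ}
    (hf : IntervalIntegrable f MeasureTheory.volume a b) (hc : ∀ s ∈ Ι a b, osc (f s) ≤ c) :
    osc (∫ s in a..b, f s) ≤ c * |b - a| :=
  osc_le_iff.2 fun i j => by
    let ℓ : (n → ℝ) →L[ℝ] ℝ := ContinuousLinearMap.proj (R := ℝ) (φ := fun _ : n => ℝ) i -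
      ContinuousLinearMap.proj (R := ℝ) (φ := fun _ : n => ℝ) j
    have hℓ : (∫ s in a..b, f s) i - (∫ s in a..b, f s) j = ∫ s in a..b, ℓ (f s) :=
      (ℓ.intervalIntegral_comp_comm hf).symm
    rw [hℓ]
    refine (le_abs_self _).trans (Real.norm_eq_abs _ ▸ norm_integral_le_of_norm_le_const
      fun s hs => ?_)
    exact (abs_sub_le_osc (f s) i j).trans (hc s hs)

end Analysis

section VariationOfConstants

variable {n : Type*} [Fintype n] [DecidableEq n]

lemma continuous_exp_sub_smul_mulVec (M : Matrix n n ℝ) {w : ℝ → n → ℝ} (hw : Continuous w)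
    (t : ℝ) : Continuous fun s => exp ((-(t - s)) • M) *ᵥ w s :=
  ((continuous_exp_smul M).comp (by fun_prop)).matrix_mulVec hw

theorem eq_exp_mulVec_add_integral (M : Matrix n n ℝ) {w e : ℝ → n → ℝ} (hw : Continuous w)
    {t₀ t : ℝ} (ht : t₀ ≤ t) (hode : ∀ s ∈ Set.Icc t₀ t, HasDerivAt e (-(M *ᵥ e s) + w s) s) :
    e t = exp ((-(t - t₀)) • M) *ᵥ e t₀ + ∫ s in t₀..t, exp ((-(t - s)) • M) *ᵥ w s := by
  set g := fun s => exp (s • M) *ᵥ e s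
  have hg : ∀ s ∈ Set.uIcc t₀ t, HasDerivAt g (exp (s • M) *ᵥ w s) s := fun s hs => by
    rw [Set.uIcc_of_le ht] at hs
    have h := (hasDerivAt_exp_smul_const M s).mulVec (hode s hs)
    rwa [mulVec_add, mulVec_neg, ← mulVec_mulVec, add_neg_cancel_left] at h
  have hcont : Continuous fun s => exp (s • M) *ᵥ w s := (continuous_exp_smul M).matrix_mulVec hw
  have hshift : ∀ s (v : n → ℝ), exp ((-t) • M) *ᵥ (exp (s • M) *ᵥ v) = exp ((-(t - s)) • M) *ᵥ v :=
    fun s v => by rw [mulVec_mulVec, exp_smul_mul_exp_smul]; congr 3; ring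
  have hcomm : exp ((-t) • M) *ᵥ (∫ s in t₀..t, exp (s • M) *ᵥ w s) =
      ∫ s in t₀..t, exp ((-t) • M) *ᵥ (exp (s • M) *ᵥ w s) :=
    ((mulVecCLM _).intervalIntegral_comp_comm (hcont.intervalIntegrable _ _)).symm
  calc e t = exp ((-t) • M) *ᵥ g t := by
        rw [hshift, sub_self, neg_zero, zero_smul, exp_zero, one_mulVec]
    _ = exp ((-t) • M) *ᵥ (g t₀ + ∫ s in t₀..t, exp (s • M) *ᵥ w s) := by
      rw [integral_eq_sub_of_hasDerivAt hg (hcont.intervalIntegrable _ _), add_sub_cancel]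
    _ = _ := by simp only [mulVec_add, hcomm, g, hshift]

end VariationOfConstants

section PerturbedConsensus

variable {n : Type*} [Fintype n] [DecidableEq n] [Nonempty n] {A : Matrix n n ℝ}
  {C ρ K l μ : ℝ} {w e : ℝ → n → ℝ}

-- Bounding the convolution integral by its length times its supremum costs a factor `t`,
-- which halving the rate absorbs.
lemma exists_osc_le_mul_exp_of_perturbed (hC : 0 ≤ C)
    (hosc : ∀ t, 0 ≤ t → ∀ x, osc (exp ((-t) • A) *ᵥ x) ≤ C * Real.exp (-ρ * t) * osc x)
    (hw_cont : Continuous w) (hw : ∀ s, 0 ≤ s → ‖w s‖ ≤ K * Real.exp (-l * s))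
    (hode : ∀ t, 0 ≤ t → HasDerivAt e (-(A *ᵥ e t) + w t) t)
    (hμ : 0 < μ) (hμρ : 2 * μ ≤ ρ) (hμl : 2 * μ ≤ l) :
    ∃ C₁, ∀ t, 0 ≤ t → osc (e t) ≤ C₁ * Real.exp (-μ * t) := by
  have hK : 0 ≤ K := (norm_nonneg _).trans (by simpa using hw 0 le_rfl)
  refine ⟨C * osc (e 0) + 2 * C * K / μ, fun t ht => ?_⟩
  have hintegrand : ∀ s ∈ Ι 0 t,
      osc (exp ((-(t - s)) • A) *ᵥ w s) ≤ 2 * C * K * Real.exp (-(2 * μ) * t) := by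
    intro s hs
    rw [Set.uIoc_of_le ht] at hs
    calc osc (exp ((-(t - s)) • A) *ᵥ w s)
        ≤ C * Real.exp (-ρ * (t - s)) * (2 * (K * Real.exp (-l * s))) := by
          refine (hosc _ (by linarith [hs.2]) _).trans
            (mul_le_mul_of_nonneg_left ?_ (by positivity))
          exact (osc_le_two_mul_norm _).trans (by linarith [hw s hs.1.le])
      _ = 2 * C * K * Real.exp (-ρ * (t - s) + -l * s) := by rw [Real.exp_add]; ring
      _ ≤ 2 * C * K * Real.exp (-(2 * μ) * t) := by
          gcongr
          nlinarith [hs.1, hs.2]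
  rw [eq_exp_mulVec_add_integral A hw_cont ht fun s hs => hode s hs.1, sub_zero]
  calc osc (exp ((-t) • A) *ᵥ e 0 + ∫ s in (0 : ℝ)..t, exp ((-(t - s)) • A) *ᵥ w s)
      ≤ C * Real.exp (-ρ * t) * osc (e 0) + 2 * C * K * Real.exp (-(2 * μ) * t) * |t - 0| :=
        (osc_add_le _ _).trans (add_le_add (hosc t ht _)
          (osc_intervalIntegral_le
            ((continuous_exp_sub_smul_mulVec A hw_cont t).intervalIntegrable _ _) hintegrand))
    _ ≤ C * Real.exp (-μ * t) * osc (e 0) + 2 * C * K * (Real.exp (-μ * t) / μ) := by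
        have hρ : Real.exp (-ρ * t) ≤ Real.exp (-μ * t) := Real.exp_le_exp.2 (by nlinarith)
        rw [sub_zero, abs_of_nonneg ht, mul_assoc (2 * C * K), mul_comm (Real.exp _) t]
        exact add_le_add
          (mul_le_mul_of_nonneg_right (mul_le_mul_of_nonneg_left hρ hC) (osc_nonneg _))
          (mul_le_mul_of_nonneg_left (mul_exp_neg_two_mul_le hμ t) (by positivity))
    _ = (C * osc (e 0) + 2 * C * K / μ) * Real.exp (-μ * t) := by ring

lemma norm_sub_le_osc_add_of_perturbed (hP : ∀ t : ℝ, 0 ≤ t → exp ((-t) • A) ∈ rowStochastic ℝ n)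
    (hw_cont : Continuous w) (hw : ∀ s, 0 ≤ s → ‖w s‖ ≤ K * Real.exp (-l * s))
    (hode : ∀ t, 0 ≤ t → HasDerivAt e (-(A *ᵥ e t) + w t) t) (hl : 0 < l) {t t' : ℝ}
    (ht : 0 ≤ t) (htt' : t ≤ t') :
    ‖e t' - e t‖ ≤ osc (e t) + K * (Real.exp (-l * t) / l) := by
  have hK : 0 ≤ K := (norm_nonneg _).trans (by simpa using hw 0 le_rfl)
  have htail : ‖∫ s in t..t', exp ((-(t' - s)) • A) *ᵥ w s‖ ≤ K * (Real.exp (-l * t) / l) := by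
    have hbound : ∀ s ∈ Set.Ioc t t',
        ‖exp ((-(t' - s)) • A) *ᵥ w s‖ ≤ K * Real.exp (-l * s) := fun s hs =>
      (norm_mulVec_le (hP _ (by linarith [hs.2])) _).trans (hw s (by linarith [hs.1]))
    have hint : IntervalIntegrable (fun s => K * Real.exp (-l * s)) MeasureTheory.volume t t' :=
      (by fun_prop : Continuous fun s => K * Real.exp (-l * s)).intervalIntegrable _ _
    refine (norm_integral_le_of_norm_le htt' (Filter.Eventually.of_forall hbound) hint).trans ?_
    rw [integral_const_mul]
    exact mul_le_mul_of_nonneg_left (integral_exp_neg_mul_le hl) hK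
  rw [eq_exp_mulVec_add_integral A hw_cont htt' fun s hs => hode s (ht.trans hs.1),
    add_sub_right_comm]
  exact (norm_add_le _ _).trans
    (add_le_add (norm_mulVec_sub_le_osc (hP _ (sub_nonneg.2 htt')) _) htail)

theorem exists_consensus_limit_of_perturbed (hC : 0 ≤ C)
    (hP : ∀ t : ℝ, 0 ≤ t → exp ((-t) • A) ∈ rowStochastic ℝ n)
    (hosc : ∀ t, 0 ≤ t → ∀ x, osc (exp ((-t) • A) *ᵥ x) ≤ C * Real.exp (-ρ * t) * osc x)
    (hw_cont : Continuous w) (hw : ∀ s, 0 ≤ s → ‖w s‖ ≤ K * Real.exp (-l * s))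
    (hode : ∀ t, 0 ≤ t → HasDerivAt e (-(A *ᵥ e t) + w t) t)
    (hμ : 0 < μ) (hμρ : 2 * μ ≤ ρ) (hμl : 2 * μ ≤ l) :
    ∃ x : n → ℝ, (∀ i j, x i = x j) ∧ ∃ C', ∀ t, 0 ≤ t → ‖e t - x‖ ≤ C' * Real.exp (-μ * t) := by
  obtain ⟨C₁, hC₁⟩ := exists_osc_le_mul_exp_of_perturbed hC hosc hw_cont hw hode hμ hμρ hμl
  have hK : 0 ≤ K := (norm_nonneg _).trans (by simpa using hw 0 le_rfl)
  have hl : 0 < l := by linarith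
  have hcauchy : ∀ t t', 0 ≤ t → t ≤ t' →
      ‖e t' - e t‖ ≤ (C₁ + K / l) * Real.exp (-μ * t) := fun t t' ht htt' => by
    have hexp : Real.exp (-l * t) ≤ Real.exp (-μ * t) := Real.exp_le_exp.2 (by nlinarith)
    calc ‖e t' - e t‖ ≤ osc (e t) + K * (Real.exp (-l * t) / l) :=
          norm_sub_le_osc_add_of_perturbed hP hw_cont hw hode hl ht htt'
      _ ≤ C₁ * Real.exp (-μ * t) + K * (Real.exp (-μ * t) / l) := by
          gcongr
          exact hC₁ t ht
      _ = (C₁ + K / l) * Real.exp (-μ * t) := by ring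
  obtain ⟨x, hx⟩ := exists_norm_sub_le_of_norm_sub_le_mul_exp hμ hcauchy
  refine ⟨x, fun i j => ?_, _, hx⟩
  have hosc_x : osc x ≤ 0 := nonpos_of_forall_le_mul_exp_neg hμ fun t ht => calc
    osc x ≤ osc (e t) + 2 * ‖x - e t‖ := osc_le_osc_add_two_mul_norm_sub x (e t)
    _ ≤ C₁ * Real.exp (-μ * t) + 2 * ((C₁ + K / l) * Real.exp (-μ * t)) := by
        rw [norm_sub_rev]
        gcongr
        exacts [hC₁ t ht, hx t ht]
    _ = (3 * C₁ + 2 * (K / l)) * Real.exp (-μ * t) := by ring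
  linarith [sub_le_osc x i j, sub_le_osc x j i]

end PerturbedConsensus

section Kronecker

variable {n m : Type*} [Fintype n] [Fintype m]

lemma norm_slice_le (x : n × m → ℝ) (k : m) : ‖fun i => x (i, k)‖ ≤ ‖x‖ :=
  (pi_norm_le_iff_of_nonneg (norm_nonneg x)).2 fun i => norm_le_pi_norm x (i, k)

lemma kronecker_one_mulVec_apply [DecidableEq m] (P : Matrix n n ℝ) (x : n × m → ℝ) (i : n)
    (k : m) :
    ((P ⊗ₖ (1 : Matrix m m ℝ)) *ᵥ x) (i, k) = (P *ᵥ fun j => x (j, k)) i := by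
  simp only [mulVec, dotProduct, Fintype.sum_prod_type, kroneckerMap_apply, one_apply]
  refine sum_congr rfl fun j _ => ?_
  rw [sum_eq_single k (fun l _ hl => by simp [Ne.symm hl]) (by simp)]
  simp

variable [DecidableEq n] [DecidableEq m] [Nonempty n] {A : Matrix n n ℝ} {C ρ K l μ : ℝ}

theorem exists_consensus_limit_of_perturbed_kronecker (hC : 0 ≤ C)
    (hP : ∀ t : ℝ, 0 ≤ t → exp ((-t) • A) ∈ rowStochastic ℝ n)
    (hosc : ∀ t, 0 ≤ t → ∀ x, osc (exp ((-t) • A) *ᵥ x) ≤ C * Real.exp (-ρ * t) * osc x)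
    {w e : ℝ → n × m → ℝ} (hw_cont : Continuous w)
    (hw : ∀ s, 0 ≤ s → ‖w s‖ ≤ K * Real.exp (-l * s))
    (hode : ∀ t, 0 ≤ t → HasDerivAt e (-((A ⊗ₖ (1 : Matrix m m ℝ)) *ᵥ e t) + w t) t)
    (hμ : 0 < μ) (hμρ : 2 * μ ≤ ρ) (hμl : 2 * μ ≤ l) :
    ∃ x : n × m → ℝ, (∀ i j k, x (i, k) = x (j, k)) ∧
      ∃ C' > 0, ∀ t, 0 ≤ t → ‖e t - x‖ ≤ C' * Real.exp (-μ * t) := by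
  have hslice : ∀ k : m, ∃ x : n → ℝ, (∀ i j, x i = x j) ∧
      ∃ C', ∀ t, 0 ≤ t → ‖(fun i => e t (i, k)) - x‖ ≤ C' * Real.exp (-μ * t) := fun k =>
    exists_consensus_limit_of_perturbed (w := fun s i => w s (i, k)) hC hP hosc (by fun_prop)
      (fun s hs => (norm_slice_le _ k).trans (hw s hs))
      (fun t ht => hasDerivAt_pi.2 fun i => by
        simpa [kronecker_one_mulVec_apply] using hasDerivAt_pi.1 (hode t ht) (i, k))
      hμ hμρ hμl
  choose x hx Cs hCs using hslice
  obtain ⟨C', hC'⟩ := Finite.exists_le Cs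
  refine ⟨fun p => x p.2 p.1, fun i j k => hx k i j, max C' 1, by positivity, fun t ht => ?_⟩
  refine (pi_norm_le_iff_of_nonneg (by positivity)).2 fun ⟨i, k⟩ => ?_
  calc ‖e t (i, k) - x k i‖ = ‖((fun i => e t (i, k)) - x k) i‖ := rfl
    _ ≤ Cs k * Real.exp (-μ * t) := (norm_le_pi_norm _ i).trans (hCs k t ht)
    _ ≤ max C' 1 * Real.exp (-μ * t) := by gcongr; exact (hC' k).trans (le_max_left _ _)

end Kronecker

section GraphLaplacian

variable {N : ℕ} (a : Fin N → Fin N → ℝ)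

lemma graphLaplacian_apply_of_ne {i j : Fin N} (h : i ≠ j) : graphLaplacian a i j = -a i j := by
  simp [graphLaplacian, h]

lemma graphLaplacian_mulVec_one : graphLaplacian a *ᵥ 1 = 0 := by
  funext i
  simp only [mulVec, dotProduct, Pi.one_apply, mul_one, Pi.zero_apply]
  rw [← add_sum_erase _ _ (mem_univ i), sum_congr rfl fun j hj =>
    graphLaplacian_apply_of_ne a (ne_of_mem_erase hj).symm, sum_neg_distrib]
  simp [graphLaplacian]

variable {a} {ku : ℝ}

lemma smul_graphLaplacian_apply_nonpos (ha : ∀ i j, 0 ≤ a i j) (hku : 0 ≤ ku) {i j : Fin N}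
    (h : i ≠ j) : (ku • graphLaplacian a) i j ≤ 0 := by
  simpa [graphLaplacian_apply_of_ne a h] using mul_nonneg hku (ha i j)

lemma reflTransGen_smul_graphLaplacian (hku : 0 < ku) {u v : Fin N}
    (h : Relation.ReflTransGen (fun u v => 0 < a v u) u v) :
    Relation.ReflTransGen (fun u v => (ku • graphLaplacian a) v u < 0) u v :=
  h.lift' id fun u v huv => by
    by_cases huv' : u = v
    · exact huv' ▸ .refl
    · exact .single (by simpa [graphLaplacian_apply_of_ne a (Ne.symm huv')] using mul_pos hku huv)

end GraphLaplacian

lemma norm_le_enorm {ι : Type*} [Fintype ι] (v : ι → ℝ) : ‖v‖ ≤ _root_.enorm v :=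
  (pi_norm_le_iff_of_nonneg (Real.sqrt_nonneg _)).2 fun i => by
    rw [Real.norm_eq_abs, ← Real.sqrt_sq_eq_abs]
    exact Real.sqrt_le_sqrt (single_le_sum (fun j _ => sq_nonneg (v j)) (mem_univ i))

lemma enorm_le_sqrt_card_mul_norm {ι : Type*} [Fintype ι] (v : ι → ℝ) :
    _root_.enorm v ≤ √(Fintype.card ι) * ‖v‖ := by
  rw [_root_.enorm, ← Real.sqrt_sq (norm_nonneg v), ← Real.sqrt_mul (Nat.cast_nonneg _)]
  have hsum : ∑ i, v i ^ 2 ≤ ∑ _i : ι, ‖v‖ ^ 2 := sum_le_sum fun i _ => by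
    rw [← sq_abs]
    exact pow_le_pow_left₀ (abs_nonneg _) (abs_apply_le_norm v i) 2
  exact Real.sqrt_le_sqrt (hsum.trans_eq (by simp))

theorem perturbed_consensus_exponential_convergence_general
    (N : ℕ) (a : Fin N → Fin N → ℝ) (ha : ∀ i j, 0 ≤ a i j)
    (L : Matrix (Fin N) (Fin N) ℝ) (hL : L = graphLaplacian a)
    (hroot : hasRootedOutBranch a)
    (ku : ℝ) (hku : 0 < ku)
    (w : ℝ → Fin N × Fin 3 → ℝ) (hw_cont : Continuous w)
    (kw lw : ℝ) (hlw : 0 < lw)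
    (hw_bound : ∀ t : ℝ, 0 ≤ t → _root_.enorm (w t) ≤ kw * Real.exp (-lw * t) * _root_.enorm (w 0))
    (e : ℝ → Fin N × Fin 3 → ℝ)
    (hode : ∀ t : ℝ, 0 ≤ t →
      HasDerivAt e
        (-(ku • ((L ⊗ₖ (1 : Matrix (Fin 3) (Fin 3) ℝ)).mulVec (e t))) + w t) t) :
    ∃ estar : Fin N × Fin 3 → ℝ,
      (∀ i j : Fin N, ∀ k : Fin 3, estar (i, k) = estar (j, k)) ∧
      ∃ c > (0 : ℝ), ∃ lam > (0 : ℝ), ∀ t : ℝ, 0 ≤ t →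
        _root_.enorm (e t - estar) ≤ c * Real.exp (-lam * t) := by
  obtain ⟨r, hr⟩ := hroot
  have : Nonempty (Fin N) := ⟨r⟩
  subst hL
  have hoff : ∀ i j, i ≠ j → (ku • graphLaplacian a) i j ≤ 0 := fun _ _ =>
    smul_graphLaplacian_apply_nonpos ha hku.le
  have hrow : (ku • graphLaplacian a) *ᵥ 1 = 0 := by
    rw [smul_mulVec, graphLaplacian_mulVec_one, smul_zero]
  obtain ⟨δ, hδ, hosc⟩ := exists_osc_exp_neg_smul_mulVec_le hoff hrow
    fun v => reflTransGen_smul_graphLaplacian hku (hr v)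
  have hw : ∀ s, 0 ≤ s → ‖w s‖ ≤ kw * _root_.enorm (w 0) * Real.exp (-lw * s) := fun s hs =>
    (norm_le_enorm _).trans ((hw_bound s hs).trans_eq (by ring))
  have hode' : ∀ t, 0 ≤ t → HasDerivAt e
      (-(((ku • graphLaplacian a) ⊗ₖ (1 : Matrix (Fin 3) (Fin 3) ℝ)) *ᵥ e t) + w t) t := by
    simpa only [smul_kronecker, smul_mulVec] using hode
  obtain ⟨estar, hcons, C, hC, hbound⟩ := exists_consensus_limit_of_perturbed_kronecker
    (μ := min δ lw / 2) (Real.exp_pos δ).le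
    (fun t ht => exp_neg_smul_mem_rowStochastic hoff hrow ht)
    hosc hw_cont hw hode' (by positivity) (by linarith [min_le_left δ lw])
    (by linarith [min_le_right δ lw])
  refine ⟨estar, hcons, √(Fintype.card (Fin N × Fin 3)) * C,
    mul_pos (Real.sqrt_pos.2 (Nat.cast_pos.2 Fintype.card_pos)) hC, min δ lw / 2, by positivity,
    fun t ht => ?_⟩
  rw [mul_assoc]
  exact (enorm_le_sqrt_card_mul_norm _).trans
    (mul_le_mul_of_nonneg_left (hbound t ht) (by positivity))

/-- solutions of the exponentially perturbed consensus dynamics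
`ė = −k_u (L ⊗ I₃) e + w(t)` on a graph with a rooted-out branch converge exponentially to
a point of the consensus set. -/
theorem perturbed_consensus_exponential_convergence
    (N : ℕ) (a : Fin N → Fin N → ℝ) (ha : ∀ i j, 0 ≤ a i j)
    (L : Matrix (Fin N) (Fin N) ℝ) (hL : L = graphLaplacian a)
    (hroot : hasRootedOutBranch a)
    (ku : ℝ) (hku : 0 < ku)
    (w : ℝ → Fin N × Fin 3 → ℝ) (hw_cont : Continuous w)
    (kw lw : ℝ) (hkw : 0 < kw) (hlw : 0 < lw)
    (hw_bound : ∀ t : ℝ, 0 ≤ t → _root_.enorm (w t) ≤ kw * Real.exp (-lw * t) * _root_.enorm (w 0))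
    (e : ℝ → Fin N × Fin 3 → ℝ)
    (hode : ∀ t : ℝ, 0 ≤ t →
      HasDerivAt e
        (-(ku • ((L ⊗ₖ (1 : Matrix (Fin 3) (Fin 3) ℝ)).mulVec (e t))) + w t) t) :
    ∃ estar : Fin N × Fin 3 → ℝ,
      (∀ i j : Fin N, ∀ k : Fin 3, estar (i, k) = estar (j, k)) ∧
      ∃ c > (0 : ℝ), ∃ lam > (0 : ℝ), ∀ t : ℝ, 0 ≤ t →
        _root_.enorm (e t - estar) ≤ c * Real.exp (-lam * t) :=
  perturbed_consensus_exponential_convergence_general N a ha L hL hroot ku hku w hw_cont kw lw hlw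
    hw_bound e hode
end

section
/- Let C_1,…,C_N be n×n real orthogonal matrices, let G be a weighted directed graph on {1,…,N} with nonnegative weights a_{ij} having a rooted-out branch, and define the block matrix H ∈ ℝ^{nN×nN} with n×n blocks H_{ij} = a_{ij} C_i C_j^T for i ≠ j with a_{ij} > 0, H_{ij} = 0 for i ≠ j with a_{ij} = 0, and H_{ii} = −(Σ_{j≠i} a_{ij}) I_n. Then every eigenvalue of H has strictly negative real part except for the eigenvalue 0, which has algebraic multiplicity exactly n. -/
open Matrix

/-- The block matrix `H` with `n×n` blocks `H_{ij} = a_{ij} C_i C_jᵀ` for `i ≠ j`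
(which is `0` when `a_{ij} = 0`), and `H_{ii} = −(∑_{j≠i} a_{ij}) Iₙ`. -/
def blockH {N n : ℕ} (a : Fin N → Fin N → ℝ) (C : Fin N → Matrix (Fin n) (Fin n) ℝ) :
    Matrix (Fin N × Fin n) (Fin N × Fin n) ℝ :=
  Matrix.of fun p q =>
    if p.1 = q.1 then
      -(∑ j ∈ Finset.univ.erase p.1, a p.1 j) * (1 : Matrix (Fin n) (Fin n) ℝ) p.2 q.2
    else a p.1 q.1 * (C p.1 * (C q.1)ᵀ) p.2 q.2

/-!
Let `D` be the block-diagonal orthogonal matrix with blocks `Cᵢ` and `B = -L`. Then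
`H = D (B ⊗ Iₙ) Dᵀ`, so the characteristic polynomial of `H` is that of `B` raised to the `n`-th
power. Gershgorin's theorem puts every eigenvalue of `B` in a disc `|μ + sₖ| ≤ sₖ` with
`sₖ = ∑_{j ≠ k} a_{kj}`, and such a disc meets the closed right half-plane only at `0`.
For the multiplicity, a maximum principle shows that the kernel of `B` consists of the constant
vectors (a maximum of a vector in the kernel propagates backwards along edges, hence to the root)
and that no nonzero constant vector lies in the range of `B`. So the generalized `0`-eigenspace
of `B` is the line of constants, and `0` is a simple root of its characteristic polynomial.
-/

open Polynomial Finset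

section charpoly

variable {R m o : Type*} [CommRing R] [Fintype m] [DecidableEq m] [Fintype o] [DecidableEq o]

theorem Matrix.charpoly_mul_mul_of_mul_eq_one {P Q : Matrix m m R} (h : Q * P = 1)
    (M : Matrix m m R) : (P * M * Q).charpoly = M.charpoly := by
  rw [charpoly_mul_comm, ← Matrix.mul_assoc, h, Matrix.one_mul]

theorem Matrix.charmatrix_blockDiagonal (M : o → Matrix m m R) :
    charmatrix (blockDiagonal M) = blockDiagonal fun k => charmatrix (M k) := by
  simp only [charmatrix, scalar_apply, RingHom.mapMatrix_apply, blockDiagonal_map _ _ C_0,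
    ← blockDiagonal_diagonal (fun (_ : o) (_ : m) => (X : R[X])), ← blockDiagonal_sub]
  rfl

theorem Matrix.charpoly_blockDiagonal (M : o → Matrix m m R) :
    (blockDiagonal M).charpoly = ∏ k, (M k).charpoly := by
  rw [charpoly, charmatrix_blockDiagonal, det_blockDiagonal]
  rfl

end charpoly

section blockDiagonalFst

variable {R ι m : Type*} [CommRing R] [Fintype ι] [DecidableEq ι] [Fintype m] [DecidableEq m]

/-- `blockDiagonal C` with the block index moved to the first coordinate, as in `blockH`. -/
def blockDiagonalFst (C : ι → Matrix m m R) : Matrix (ι × m) (ι × m) R :=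
  (blockDiagonal C).submatrix (Equiv.prodComm ι m) (Equiv.prodComm ι m)

omit [Fintype ι] [Fintype m] [DecidableEq m] in
@[simp]
theorem blockDiagonalFst_apply (C : ι → Matrix m m R) (x y : ι × m) :
    blockDiagonalFst C x y = if x.1 = y.1 then C x.1 x.2 y.2 else 0 := by
  simp [blockDiagonalFst, blockDiagonal_apply]

theorem transpose_blockDiagonalFst_mul_self {C : ι → Matrix m m R}
    (hC : ∀ i, (C i)ᵀ * C i = 1) : (blockDiagonalFst C)ᵀ * blockDiagonalFst C = 1 := by
  rw [blockDiagonalFst, transpose_submatrix, submatrix_mul_equiv, blockDiagonal_transpose,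
    ← blockDiagonal_mul, show (fun i => (C i)ᵀ * C i) = 1 from funext hC, blockDiagonal_one,
    submatrix_one_equiv]

theorem blockDiagonalFst_mul_blockDiagonal_mul_transpose (B : Matrix ι ι R)
    (C : ι → Matrix m m R) :
    blockDiagonalFst C * blockDiagonal (fun _ => B) * (blockDiagonalFst C)ᵀ
      = of fun x y => B x.1 y.1 * (C x.1 * (C y.1)ᵀ) x.2 y.2 := by
  ext ⟨i, p⟩ ⟨j, q⟩
  simp only [Matrix.mul_apply, blockDiagonalFst_apply, blockDiagonal_apply, mul_ite, ite_mul,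
    zero_mul, mul_zero, Fintype.sum_prod_type, sum_ite_eq', mem_univ, ↓reduceIte, sum_ite_eq,
    transpose_apply, sum_ite_irrel, sum_const_zero, mul_sum, of_apply]
  exact sum_congr rfl fun _ _ => by ring

end blockDiagonalFst

theorem Module.End.maxGenEigenspace_zero_eq_ker {R M : Type*} [CommRing R] [AddCommGroup M]
    [Module R M] (φ : Module.End R M) (h : ∀ x, φ (φ x) = 0 → φ x = 0) :
    φ.maxGenEigenspace 0 = LinearMap.ker φ := by
  have hpow : ∀ k x, (φ ^ (k + 1)) x = 0 → φ x = 0 := by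
    intro k
    induction k with
    | zero => simp
    | succ k ih =>
      intro x hx
      exact h x (ih (φ x) (by rwa [← Module.End.mul_apply, ← pow_succ]))
  ext x
  simp only [mem_maxGenEigenspace, zero_smul, sub_zero, LinearMap.mem_ker]
  refine ⟨fun ⟨k, hk⟩ => ?_, fun hx => ⟨1, by rwa [pow_one]⟩⟩
  cases k with
  | zero => rw [pow_zero, Module.End.one_apply] at hk; rw [hk, map_zero]
  | succ k => exact hpow k x hk

theorem Complex.eq_zero_or_re_neg_of_mem_closedBall {s : ℝ} {μ : ℂ}
    (h : μ ∈ Metric.closedBall (-(s : ℂ)) s) : μ = 0 ∨ μ.re < 0 := by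
  rw [Metric.mem_closedBall, dist_eq_norm, sub_neg_eq_add] at h
  have hs : 0 ≤ s := (norm_nonneg _).trans h
  have hsq : (μ.re + s) ^ 2 + μ.im ^ 2 ≤ s ^ 2 := by
    have := pow_le_pow_left₀ (norm_nonneg _) h 2
    rwa [Complex.sq_norm, Complex.normSq_apply, Complex.add_re, Complex.add_im,
      Complex.ofReal_re, Complex.ofReal_im, add_zero, ← sq, ← sq] at this
  rcases lt_or_ge μ.re 0 with hre | hre
  · exact Or.inr hre
  · left
    apply Complex.ext <;> simp only [Complex.zero_re, Complex.zero_im] <;> nlinarith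

section

variable {ι : Type*} [Fintype ι] [DecidableEq ι]

def laplacian (a : ι → ι → ℝ) : Matrix ι ι ℝ :=
  of fun i j => if i = j then ∑ k ∈ univ.erase i, a i k else -a i j

namespace laplacian

variable {a : ι → ι → ℝ} {u : ι → ℝ}

theorem mulVec_apply (a : ι → ι → ℝ) (u : ι → ℝ) (i : ι) :
    (laplacian a *ᵥ u) i = ∑ j ∈ univ.erase i, a i j * (u i - u j) := by
  rw [mulVec, dotProduct, ← add_sum_erase _ _ (mem_univ i),
    sum_congr rfl fun j hj => by rw [laplacian, of_apply, if_neg (ne_of_mem_erase hj).symm]]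
  simp only [laplacian, of_apply, if_true, mul_sub, sum_sub_distrib, sum_mul, neg_mul,
    sum_neg_distrib]
  ring

theorem mulVec_one (a : ι → ι → ℝ) : laplacian a *ᵥ 1 = 0 := by
  ext i
  simp [mulVec_apply]

theorem mulVec_nonneg_of_isMax (ha : ∀ i j, 0 ≤ a i j) {i : ι} (hi : ∀ j, u j ≤ u i) :
    0 ≤ (laplacian a *ᵥ u) i := by
  rw [mulVec_apply]
  exact sum_nonneg fun j _ => mul_nonneg (ha i j) (sub_nonneg.2 (hi j))

theorem eq_zero_of_mulVec_eq_smul_one [Nonempty ι] (ha : ∀ i j, 0 ≤ a i j) {t : ℝ}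
    (hu : laplacian a *ᵥ u = t • 1) : t = 0 := by
  have hneg : laplacian a *ᵥ -u = (-t) • 1 := by rw [mulVec_neg, hu, neg_smul]
  obtain ⟨i, hi⟩ := Finite.exists_max u
  obtain ⟨k, hk⟩ := Finite.exists_min u
  have h₁ := mulVec_nonneg_of_isMax ha hi
  have h₂ := mulVec_nonneg_of_isMax (u := -u) ha fun j => neg_le_neg (hk j)
  rw [hu] at h₁
  rw [hneg] at h₂
  simp only [Pi.smul_apply, Pi.one_apply, smul_eq_mul, mul_one] at h₁ h₂
  linarith

theorem eq_of_mulVec_eq_zero_of_isMax (ha : ∀ i j, 0 ≤ a i j) {i j : ι}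
    (hu : (laplacian a *ᵥ u) i = 0) (hi : ∀ k, u k ≤ u i) (hij : 0 < a i j) : u j = u i := by
  rcases eq_or_ne j i with rfl | hji
  · rfl
  rw [mulVec_apply,
    sum_eq_zero_iff_of_nonneg fun k _ => mul_nonneg (ha i k) (sub_nonneg.2 (hi k))] at hu
  have := hu j (mem_erase.2 ⟨hji, mem_univ j⟩)
  rw [mul_eq_zero, sub_eq_zero] at this
  exact (this.resolve_left hij.ne').symm

theorem le_apply_root_of_mulVec_eq_zero (ha : ∀ i j, 0 ≤ a i j) {r : ι}
    (hr : ∀ v, Relation.ReflTransGen (fun u v => 0 < a v u) r v)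
    (hu : laplacian a *ᵥ u = 0) (v : ι) : u v ≤ u r := by
  have : Nonempty ι := ⟨r⟩
  obtain ⟨i, hi⟩ := Finite.exists_max u
  have hmax : ∀ w, Relation.ReflTransGen (fun u v => 0 < a v u) w i → u w = u i := by
    intro w hw
    induction hw using Relation.ReflTransGen.head_induction_on with
    | refl => rfl
    | head hwx _ ih =>
      exact (eq_of_mulVec_eq_zero_of_isMax ha (congrFun hu _) (ih ▸ hi) hwx).trans ih
  exact hmax r (hr i) ▸ hi v

theorem eq_apply_root_of_mulVec_eq_zero (ha : ∀ i j, 0 ≤ a i j) {r : ι}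
    (hr : ∀ v, Relation.ReflTransGen (fun u v => 0 < a v u) r v)
    (hu : laplacian a *ᵥ u = 0) (v : ι) : u v = u r :=
  le_antisymm (le_apply_root_of_mulVec_eq_zero ha hr hu v) <| neg_le_neg_iff.1 <|
    le_apply_root_of_mulVec_eq_zero ha hr (by rw [mulVec_neg, hu, neg_zero]) v

theorem ker_toLin'_neg (ha : ∀ i j, 0 ≤ a i j) {r : ι}
    (hr : ∀ v, Relation.ReflTransGen (fun u v => 0 < a v u) r v) :
    LinearMap.ker (toLin' (-laplacian a)) = Submodule.span ℝ {1} := by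
  ext u
  rw [LinearMap.mem_ker, toLin'_apply, neg_mulVec, neg_eq_zero, Submodule.mem_span_singleton]
  constructor
  · intro hu
    exact ⟨u r, funext fun v => by simp [eq_apply_root_of_mulVec_eq_zero ha hr hu v]⟩
  · rintro ⟨c, rfl⟩
    rw [mulVec_smul, mulVec_one, smul_zero]

theorem rootMultiplicity_zero_charpoly_neg (ha : ∀ i j, 0 ≤ a i j) {r : ι}
    (hr : ∀ v, Relation.ReflTransGen (fun u v => 0 < a v u) r v) :
    (-laplacian a).charpoly.rootMultiplicity 0 = 1 := by
  have : Nonempty ι := ⟨r⟩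
  have hker := ker_toLin'_neg ha hr
  have hnil : ∀ u, toLin' (-laplacian a) (toLin' (-laplacian a) u) = 0 →
      toLin' (-laplacian a) u = 0 := by
    intro u hu
    obtain ⟨c, hc⟩ := Submodule.mem_span_singleton.1 (hker ▸ LinearMap.mem_ker.2 hu)
    have : c = 0 := eq_zero_of_mulVec_eq_smul_one ha (u := -u) <| by
      rw [mulVec_neg, ← neg_mulVec, ← toLin'_apply, hc]
    rw [← hc, this, zero_smul]
  rw [rootMultiplicity_eq_natTrailingDegree', ← charpoly_toLin',
    ← LinearMap.finrank_maxGenEigenspace_zero_eq, Module.End.maxGenEigenspace_zero_eq_ker _ hnil,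
    hker, finrank_span_singleton one_ne_zero]

theorem eq_zero_or_re_neg_of_hasEigenvalue (ha : ∀ i j, 0 ≤ a i j) {μ : ℂ}
    (hμ : Module.End.HasEigenvalue (toLin' ((-laplacian a).map Complex.ofReal)) μ) :
    μ = 0 ∨ μ.re < 0 := by
  obtain ⟨k, hk⟩ := eigenvalue_mem_ball hμ
  have hdiag : (-laplacian a).map Complex.ofReal k k
      = -((∑ j ∈ univ.erase k, a k j : ℝ) : ℂ) := by
    simp [laplacian]
  have hrad : ∑ j ∈ univ.erase k, ‖(-laplacian a).map Complex.ofReal k j‖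
      = ∑ j ∈ univ.erase k, a k j :=
    sum_congr rfl fun j hj => by
      simp [laplacian, (ne_of_mem_erase hj).symm, abs_of_nonneg (ha k j)]
  rw [hdiag, hrad] at hk
  exact Complex.eq_zero_or_re_neg_of_mem_closedBall hk

end laplacian

end

section blockH

variable {N n : ℕ} {C : Fin N → Matrix (Fin n) (Fin n) ℝ}

theorem blockH_eq_conj (a : Fin N → Fin N → ℝ) (hC : ∀ i, (C i)ᵀ * C i = 1) :
    blockH a C
      = blockDiagonalFst C * blockDiagonal (fun _ => -laplacian a) * (blockDiagonalFst C)ᵀ := by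
  rw [blockDiagonalFst_mul_blockDiagonal_mul_transpose]
  ext ⟨i, p⟩ ⟨j, q⟩
  rcases eq_or_ne i j with rfl | hij
  · simp only [blockH, laplacian, of_apply, ↓reduceIte, Matrix.neg_apply, neg_mul,
      mul_eq_one_comm.1 (hC i)]
  · simp [blockH, laplacian, hij]

theorem charpoly_blockH (a : Fin N → Fin N → ℝ) (hC : ∀ i, (C i)ᵀ * C i = 1) :
    (blockH a C).charpoly = (-laplacian a).charpoly ^ n := by
  rw [blockH_eq_conj a hC,
    charpoly_mul_mul_of_mul_eq_one (transpose_blockDiagonalFst_mul_self hC),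
    charpoly_blockDiagonal, prod_const, card_univ, Fintype.card_fin]

end blockH

/-- for orthogonal `C₁,…,C_N` and a graph with a rooted-out branch, every
eigenvalue of `H` has strictly negative real part except the eigenvalue `0`, which has
algebraic multiplicity exactly `n`. -/
theorem blockH_spectrum
    (N n : ℕ) (a : Fin N → Fin N → ℝ) (ha : ∀ i j, 0 ≤ a i j)
    (hroot : hasRootedOutBranch a)
    (C : Fin N → Matrix (Fin n) (Fin n) ℝ)
    (hC : ∀ i, (C i)ᵀ * C i = 1) :
    (∀ μ : ℂ, ((blockH a C).map (Complex.ofReal)).charpoly.IsRoot μ → μ = 0 ∨ μ.re < 0) ∧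
    ((blockH a C).map (Complex.ofReal)).charpoly.rootMultiplicity 0 = n := by
  obtain ⟨r, hr⟩ := hroot
  have hchar : ((blockH a C).map Complex.ofReal).charpoly
      = ((-laplacian a).charpoly ^ n).map Complex.ofRealHom := by
    rw [← charpoly_blockH a hC]
    exact charpoly_map _ Complex.ofRealHom
  refine ⟨fun μ hμ => ?_, ?_⟩
  · rw [hchar, Polynomial.map_pow, ← charpoly_map, IsRoot, eval_pow] at hμ
    apply laplacian.eq_zero_or_re_neg_of_hasEigenvalue ha
    rw [Module.End.hasEigenvalue_iff_isRoot_charpoly, charpoly_toLin']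
    exact eq_zero_of_pow_eq_zero hμ
  · classical
    rw [hchar, ← map_zero Complex.ofRealHom, ← eq_rootMultiplicity_map Complex.ofReal_injective,
      ← count_roots, roots_pow, Multiset.count_nsmul, count_roots,
      laplacian.rootMultiplicity_zero_charpoly_neg ha hr, mul_one]
end
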